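/- Let d ≥ 1, σ ≥ 1, δ ∈ (0,1/2] and θ₂ > 0. There exists a constant C₀ > 0, depending only on d, σ, δ and θ₂, such that for all t ≥ 0 and all k, ℓ ∈ ℤ^d ∖ {0} with k ≠ ℓ: sup_{0 ≤ s ≤ t} e^{−(θ₂/4)|k|(t−s)/⟨t⟩^{δ}} · min{⟨ℓ,ℓs⟩, ⟨k−ℓ, kt−ℓs⟩}^{−σ} ≤ C₀ ⟨t⟩^{−2δ}. -/

import Mathlib

open MeasureTheory
open scoped ENNReal

noncomputable section

/-- `ℝ^d` with the Euclidean norm. -/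
abbrev Ed (d : ℕ) := EuclideanSpace ℝ (Fin d)

/-- Embedding of `ℤ^d` into `ℝ^d`. -/
def toE {d : ℕ} (k : Fin d → ℤ) : Ed d := WithLp.toLp 2 (fun i => (k i : ℝ))

/-- Japanese bracket of a scalar: `⟨u⟩ = (1+u²)^{1/2}`. -/
def jap (u : ℝ) : ℝ := Real.sqrt (1 + u ^ 2)

/-- Japanese bracket of a vector: `⟨η⟩ = (1+|η|²)^{1/2}`. -/
def japV {d : ℕ} (η : Ed d) : ℝ := Real.sqrt (1 + ‖η‖ ^ 2)

/-- Joint bracket `⟨k,η⟩ = (1+|k|²+|η|²)^{1/2}`. -/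
def japKV {d : ℕ} (k : Fin d → ℤ) (η : Ed d) : ℝ := Real.sqrt (1 + ‖toE k‖ ^ 2 + ‖η‖ ^ 2)

/-- The analytic weight `A_{k,η}(z) = e^{z⟨k,η⟩} ⟨η⟩^σ`. -/
def wA (d : ℕ) (σ z : ℝ) (k : Fin d → ℤ) (η : Ed d) : ℝ :=
  Real.exp (z * japKV k η) * japV η ^ σ

/-!
Write `M` for the minimum of the two brackets and `y = |k|(t-s)`. Both brackets are at least `1`,
`⟨ℓ,ℓs⟩ ≥ s`, and `⟨k-ℓ,kt-ℓs⟩ ≥ |s(k-ℓ)| - |(t-s)k| ≥ s - y`; since also `y ≥ t - s`, this gives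
`1 + t ≤ 2M + 2y`. So either `M ≳ 1 + t`, and `M^{-σ} ≤ M^{-1} ≲ ⟨t⟩^{-1} ≤ ⟨t⟩^{-2δ}`, or
`y ≳ 1 + t`, and then the exponent is `≳ θ₂ (1 + t)/⟨t⟩^δ ≥ θ₂ ⟨t⟩^δ` (as `δ ≤ 1/2`), so that
`e^{-x} ≤ 2/x²` yields the factor `⟨t⟩^{-2δ}`.
-/

lemma one_le_norm_toE {d : ℕ} {k : Fin d → ℤ} (hk : k ≠ 0) : 1 ≤ ‖toE k‖ := by
  obtain ⟨i, hi⟩ := Function.ne_iff.mp hk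
  calc (1 : ℝ) ≤ |(k i : ℝ)| := by exact_mod_cast Int.one_le_abs hi
    _ = ‖toE k i‖ := by simp [toE]
    _ ≤ ‖toE k‖ := PiLp.norm_apply_le _ i

lemma toE_sub {d : ℕ} (k ℓ : Fin d → ℤ) : toE (k - ℓ) = toE k - toE ℓ := by
  ext i
  simp [toE]

lemma norm_le_japKV {d : ℕ} (k : Fin d → ℤ) (η : Ed d) : ‖η‖ ≤ japKV k η :=
  Real.le_sqrt_of_sq_le (by nlinarith [sq_nonneg ‖toE k‖])

lemma one_le_japKV {d : ℕ} (k : Fin d → ℤ) (η : Ed d) : 1 ≤ japKV k η :=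
  Real.one_le_sqrt.mpr (by nlinarith [sq_nonneg ‖toE k‖, sq_nonneg ‖η‖])

lemma le_japKV_smul_self {d : ℕ} {ℓ : Fin d → ℤ} (hℓ : ℓ ≠ 0) {s : ℝ} (hs : 0 ≤ s) :
    s ≤ japKV ℓ (s • toE ℓ) := by
  have hnorm : ‖s • toE ℓ‖ = s * ‖toE ℓ‖ := by rw [norm_smul, Real.norm_of_nonneg hs]
  nlinarith [norm_le_japKV ℓ (s • toE ℓ), one_le_norm_toE hℓ]

lemma le_japKV_sub_add {d : ℕ} {k ℓ : Fin d → ℤ} (hkl : k ≠ ℓ) {s t : ℝ} (hs : 0 ≤ s)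
    (hst : s ≤ t) :
    s ≤ japKV (k - ℓ) (t • toE k - s • toE ℓ) + (t - s) * ‖toE k‖ := by
  have hsplit : s • toE (k - ℓ) = (t • toE k - s • toE ℓ) - (t - s) • toE k := by
    rw [toE_sub, smul_sub, sub_smul]; abel
  have hleft : s ≤ ‖s • toE (k - ℓ)‖ := by
    rw [norm_smul, Real.norm_of_nonneg hs]
    nlinarith [one_le_norm_toE (sub_ne_zero.mpr hkl)]
  have htri : ‖s • toE (k - ℓ)‖ ≤ ‖t • toE k - s • toE ℓ‖ + (t - s) * ‖toE k‖ := by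
    have hnorm : ‖(t - s) • toE k‖ = (t - s) * ‖toE k‖ := by
      rw [norm_smul, Real.norm_of_nonneg (sub_nonneg.mpr hst)]
    rw [hsplit, ← hnorm]
    exact norm_sub_le _ _
  linarith [norm_le_japKV (k - ℓ) (t • toE k - s • toE ℓ)]

lemma one_add_le_two_mul_min_japKV_add {d : ℕ} {k ℓ : Fin d → ℤ} (hk : k ≠ 0) (hℓ : ℓ ≠ 0)
    (hkl : k ≠ ℓ) {s t : ℝ} (hs : 0 ≤ s) (hst : s ≤ t) :
    1 + t ≤ 2 * min (japKV ℓ (s • toE ℓ)) (japKV (k - ℓ) (t • toE k - s • toE ℓ)) +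
      2 * (‖toE k‖ * (t - s)) := by
  have htrans : t - s ≤ ‖toE k‖ * (t - s) :=
    le_mul_of_one_le_left (sub_nonneg.mpr hst) (one_le_norm_toE hk)
  have hA := le_japKV_smul_self hℓ hs
  have hB := le_japKV_sub_add hkl hs hst
  have hmin : t ≤ min (japKV ℓ (s • toE ℓ)) (japKV (k - ℓ) (t • toE k - s • toE ℓ)) +
      2 * (‖toE k‖ * (t - s)) := by
    rcases min_choice (japKV ℓ (s • toE ℓ)) (japKV (k - ℓ) (t • toE k - s • toE ℓ)) with h | h <;>
      rw [h] <;> nlinarith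
  linarith [le_min (one_le_japKV ℓ (s • toE ℓ)) (one_le_japKV (k - ℓ) (t • toE k - s • toE ℓ))]

lemma one_le_jap (t : ℝ) : 1 ≤ jap t :=
  Real.one_le_sqrt.mpr (by nlinarith [sq_nonneg t])

lemma jap_le_one_add {t : ℝ} (ht : 0 ≤ t) : jap t ≤ 1 + t :=
  Real.sqrt_le_iff.mpr ⟨by linarith, by nlinarith⟩

lemma sq_jap_rpow_le {t δ : ℝ} (ht : 0 ≤ t) (hδ : δ ≤ 1 / 2) : (jap t ^ δ) ^ 2 ≤ 1 + t := by
  have hjap := one_le_jap t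
  calc (jap t ^ δ) ^ 2 = jap t ^ (2 * δ) := by
        rw [mul_comm, Real.rpow_mul (by linarith), Real.rpow_two]
    _ ≤ jap t ^ (1 : ℝ) := Real.rpow_le_rpow_of_exponent_le hjap (by linarith)
    _ ≤ 1 + t := by rw [Real.rpow_one]; exact jap_le_one_add ht

lemma jap_rpow_neg_two_mul (t δ : ℝ) : jap t ^ (-(2 * δ)) = ((jap t ^ δ) ^ 2)⁻¹ := by
  have hjap : 0 ≤ jap t := by linarith [one_le_jap t]
  rw [Real.rpow_neg hjap, mul_comm, Real.rpow_mul hjap, Real.rpow_two]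

lemma exp_neg_le_two_div_sq {x : ℝ} (hx : 0 < x) : Real.exp (-x) ≤ 2 / x ^ 2 := by
  have hquad : x ^ 2 / 2 ≤ Real.exp x := by simpa using Real.pow_div_factorial_le_exp x hx.le 2
  rw [Real.exp_neg, inv_le_comm₀ (Real.exp_pos x) (by positivity), inv_div]
  exact hquad

lemma rpow_neg_le_inv {M σ : ℝ} (hM : 1 ≤ M) (hσ : 1 ≤ σ) : M ^ (-σ) ≤ M⁻¹ := by
  simpa [Real.rpow_neg_one] using Real.rpow_le_rpow_of_exponent_le hM (neg_le_neg hσ)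

/-- The scalar core of the estimate, with `a = ⟨t⟩^δ`, `y = |k|(t-s)` and `M` the smaller
bracket. -/
lemma exp_mul_rpow_neg_le {θ a t y M σ : ℝ} (hθ : 0 < θ) (ha : 0 < a) (hat : a ^ 2 ≤ 1 + t)
    (hy : 0 ≤ y) (hM : 1 ≤ M) (hσ : 1 ≤ σ) (hsum : 1 + t ≤ 2 * M + 2 * y) :
    Real.exp (-(θ / 4) * y / a) * M ^ (-σ) ≤ (4 + 512 / θ ^ 2) / a ^ 2 := by
  have hexp : Real.exp (-(θ / 4) * y / a) ≤ 1 :=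
    Real.exp_le_one_iff.mpr (div_nonpos_of_nonpos_of_nonneg (by nlinarith) ha.le)
  have hpow : M ^ (-σ) ≤ 1 := Real.rpow_le_one_of_one_le_of_nonpos hM (by linarith)
  have hpow0 : 0 ≤ M ^ (-σ) := Real.rpow_nonneg (by linarith) _
  have hC : (4 + 512 / θ ^ 2) / a ^ 2 = 4 / a ^ 2 + 512 / (θ ^ 2 * a ^ 2) := by
    field_simp
  rw [hC]
  rcases le_or_gt (1 + t) (4 * M) with hlarge | hsmall
  · have hM_inv : M⁻¹ ≤ 4 / a ^ 2 := by
      rw [inv_le_comm₀ (by linarith) (by positivity), inv_div, div_le_iff₀ (by norm_num)]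
      linarith
    calc Real.exp (-(θ / 4) * y / a) * M ^ (-σ) ≤ 1 * M⁻¹ :=
          mul_le_mul hexp (rpow_neg_le_inv hM hσ) hpow0 zero_le_one
      _ ≤ 4 / a ^ 2 + 512 / (θ ^ 2 * a ^ 2) := by
          rw [one_mul]; exact hM_inv.trans (le_add_of_nonneg_right (by positivity))
  · -- here `y ≥ (1 + t)/4 ≥ a²/4`, so the exponent is at least `θ a / 16`
    have hx : θ * a / 16 ≤ θ / 4 * y / a := by
      rw [le_div_iff₀ ha]; nlinarith
    have hx0 : 0 < θ * a / 16 := by positivity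
    calc Real.exp (-(θ / 4) * y / a) * M ^ (-σ) ≤ Real.exp (-(θ * a / 16)) * 1 := by
          refine mul_le_mul (Real.exp_le_exp.mpr ?_) hpow hpow0 (Real.exp_nonneg _)
          rw [neg_mul, neg_div]; exact neg_le_neg hx
      _ ≤ 2 / (θ * a / 16) ^ 2 := by rw [mul_one]; exact exp_neg_le_two_div_sq hx0
      _ = 512 / (θ ^ 2 * a ^ 2) := by field_simp; ring
      _ ≤ 4 / a ^ 2 + 512 / (θ ^ 2 * a ^ 2) := le_add_of_nonneg_left (by positivity)

theorem pointwise_echo_gain_general (d : ℕ) (σ δ θ₂ : ℝ)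
    (hσ : 1 ≤ σ) (hδ1 : δ ≤ 1 / 2) (hθ : 0 < θ₂) :
    ∃ C₀ > (0:ℝ), ∀ t : ℝ, 0 ≤ t →
      ∀ k ℓ : Fin d → ℤ, k ≠ 0 → ℓ ≠ 0 → k ≠ ℓ →
      ∀ s : ℝ, 0 ≤ s → s ≤ t →
        Real.exp (-(θ₂ / 4) * ‖toE k‖ * (t - s) / jap t ^ δ) *
          min (japKV ℓ (s • toE ℓ)) (japKV (k - ℓ) (t • toE k - s • toE ℓ)) ^ (-σ) ≤
        C₀ * jap t ^ (-(2 * δ)) := by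
  refine ⟨4 + 512 / θ₂ ^ 2, by positivity, fun t ht k ℓ hk hℓ hkl s hs hst => ?_⟩
  have hjap : 0 < jap t ^ δ := Real.rpow_pos_of_pos (by linarith [one_le_jap t]) δ
  rw [jap_rpow_neg_two_mul, ← div_eq_mul_inv, mul_assoc (-(θ₂ / 4))]
  exact exp_mul_rpow_neg_le hθ hjap (sq_jap_rpow_le ht hδ1)
    (mul_nonneg (norm_nonneg _) (sub_nonneg.mpr hst))
    (le_min (one_le_japKV _ _) (one_le_japKV _ _)) hσ
    (one_add_le_two_mul_min_japKV_add hk hℓ hkl hs hst)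

/-- for `k ≠ ℓ` both nonzero, the pointwise bound
`sup_{0≤s≤t} e^{-(θ₂/4)|k|(t-s)/⟨t⟩^δ} min{⟨ℓ,ℓs⟩,⟨k-ℓ,kt-ℓs⟩}^{-σ} ≤ C₀⟨t⟩^{-2δ}`. -/
theorem pointwise_echo_gain (d : ℕ) (hd : 1 ≤ d) (σ δ θ₂ : ℝ)
    (hσ : 1 ≤ σ) (hδ0 : 0 < δ) (hδ1 : δ ≤ 1 / 2) (hθ : 0 < θ₂) :
    ∃ C₀ > (0:ℝ), ∀ t : ℝ, 0 ≤ t →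
      ∀ k ℓ : Fin d → ℤ, k ≠ 0 → ℓ ≠ 0 → k ≠ ℓ →
      ∀ s : ℝ, 0 ≤ s → s ≤ t →
        Real.exp (-(θ₂ / 4) * ‖toE k‖ * (t - s) / jap t ^ δ) *
          min (japKV ℓ (s • toE ℓ)) (japKV (k - ℓ) (t • toE k - s • toE ℓ)) ^ (-σ) ≤
        C₀ * jap t ^ (-(2 * δ)) :=
  pointwise_echo_gain_general d σ δ θ₂ hσ hδ1 hθ
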